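/- arXiv:1908.11123 — 2 statements merged into one kernel-verified Lean document; each statement's English description precedes it below -/
import Mathlib

section
/- Let K be a nonempty finite set (the parties) and for each k ∈ K let d_k ≥ 1, let A_k (outcomes) and X_k (settings) be nonempty finite sets. For each k ∈ K, x ∈ X_k, a ∈ A_k let M_{k,a}^x be a positive semidefinite d_k×d_k complex matrix, and set M_{k,✓}^x := Σ_{a∈A_k} M_{k,a}^x. Assume strong fair sampling: there exist reals e_k(x) with 0 < e_k(x) ≤ 1 such that M_{k,✓}^x = e_k(x) • 𝟙 for all k ∈ K and x ∈ X_k. Let Ψ be a density matrix on the tensor-product space indexed by Π_{k∈K} Fin(d_k). Then: (a) Σ_{a∈A_k} e_k(x)⁻¹ • M_{k,a}^x = 𝟙 for every k and x; and (b) for every tuple of settings x̄ ∈ Π_k X_k and outcomes ā ∈ Π_k A_k, Tr((⊗_{k∈K} M_{k,ā(k)}^{x̄(k)}) Ψ) / Tr((⊗_{k∈K} M_{k,✓}^{x̄(k)}) Ψ) = Tr((⊗_{k∈K} e_k(x̄(k))⁻¹ • M_{k,ā(k)}^{x̄(k)}) Ψ). That is, under strong fair sampling the post-selected statistics equal the statistics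 obtained by measuring the actual state Ψ with lossless devices. -/
/-
Strong fair sampling makes every click operator `M_{k,✓}^x` a scalar `e_k(x) • 𝟙`, so the
denominator `Tr((⊗ M_{k,✓}) Ψ)` is just `∏ e_k(x̄ k)` (as `Tr Ψ = 1`), and that product of
scalars can be pulled into the numerator factor by factor.
-/

open scoped ComplexOrder

/-- The tensor product `⊗_{k∈K} A_k`, indexed by tuples in `Π_{k∈K} Fin (d k)`. -/
noncomputable def tensorProd {K : Type*} [Fintype K] {d : K → ℕ}
    (A : ∀ k, Matrix (Fin (d k)) (Fin (d k)) ℂ) :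
    Matrix (∀ k, Fin (d k)) (∀ k, Fin (d k)) ℂ :=
  fun f g => ∏ k, A k (f k) (g k)

section TensorProd

variable {K : Type*} [Fintype K] {d : K → ℕ}

theorem tensorProd_one : tensorProd (K := K) (d := d) (fun _ => 1) = 1 := by
  funext f g
  by_cases hfg : f = g
  · subst hfg
    simp [tensorProd]
  · obtain ⟨k, hk⟩ := Function.ne_iff.mp hfg
    rw [Matrix.one_apply_ne hfg]
    exact Finset.prod_eq_zero (Finset.mem_univ k) (Matrix.one_apply_ne hk)

theorem tensorProd_smul (c : K → ℂ) (B : ∀ k, Matrix (Fin (d k)) (Fin (d k)) ℂ) :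
    tensorProd (fun k => c k • B k) = (∏ k, c k) • tensorProd B := by
  funext f g
  simp [tensorProd, Finset.prod_mul_distrib]

theorem tensorProd_smul_one (c : K → ℂ) :
    tensorProd (fun k => c k • (1 : Matrix (Fin (d k)) (Fin (d k)) ℂ)) = (∏ k, c k) • 1 := by
  rw [tensorProd_smul, tensorProd_one]

end TensorProd

theorem sum_inv_smul_eq_one_of_sum_eq_smul_one {ι n : Type*} [Fintype ι] [Fintype n]
    [DecidableEq n] {M : ι → Matrix n n ℂ} {c : ℂ} (hc : c ≠ 0) (hM : ∑ a, M a = c • 1) :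
    ∑ a, c⁻¹ • M a = 1 := by
  rw [← Finset.smul_sum, hM, smul_smul, inv_mul_cancel₀ hc, one_smul]

theorem strong_fair_sampling_postselected_eq_actual_general
    (K : Type*) [Fintype K] [DecidableEq K]
    (d : K → ℕ)
    (A X : K → Type*) [∀ k, Fintype (A k)]
    (M : ∀ k, X k → A k → Matrix (Fin (d k)) (Fin (d k)) ℂ)
    (e : ∀ k, X k → ℝ) (he0 : ∀ k x, 0 < e k x)
    (hfac : ∀ k x, ∑ a, M k x a = (e k x : ℂ) • (1 : Matrix (Fin (d k)) (Fin (d k)) ℂ))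
    (Ψ : Matrix (∀ k, Fin (d k)) (∀ k, Fin (d k)) ℂ)
    (hΨtr : Ψ.trace = 1) :
    (∀ k x, ∑ a, (e k x : ℂ)⁻¹ • M k x a = (1 : Matrix (Fin (d k)) (Fin (d k)) ℂ)) ∧
    ∀ (xb : ∀ k, X k) (ab : ∀ k, A k),
      Matrix.trace (tensorProd (fun k => M k (xb k) (ab k)) * Ψ) /
          Matrix.trace (tensorProd (fun k => ∑ a, M k (xb k) a) * Ψ) =
        Matrix.trace (tensorProd (fun k => (e k (xb k) : ℂ)⁻¹ • M k (xb k) (ab k)) * Ψ) := by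
  have he : ∀ k x, (e k x : ℂ) ≠ 0 := fun k x => by exact_mod_cast (he0 k x).ne'
  refine ⟨fun k x => sum_inv_smul_eq_one_of_sum_eq_smul_one (he k x) (hfac k x), ?_⟩
  intro xb ab
  have hclick : tensorProd (fun k => ∑ a, M k (xb k) a) = (∏ k, (e k (xb k) : ℂ)) • 1 := by
    simp only [hfac]
    exact tensorProd_smul_one _
  rw [hclick, tensorProd_smul, Matrix.smul_mul, Matrix.trace_smul, Matrix.smul_mul,
    Matrix.trace_smul, Matrix.one_mul, hΨtr, smul_eq_mul, smul_eq_mul, mul_one,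
    Finset.prod_inv_distrib, div_eq_inv_mul]

/-- Under strong fair sampling (`M_{k,✓}^x = e_k(x) • 𝟙` with `0 < e_k(x) ≤ 1`),
the rescaled POVMs `e_k(x)⁻¹ • M_{k,a}^x` are lossless, and the post-selected statistics of the
lossy devices on the actual state `Ψ` equal the statistics of these lossless devices on `Ψ`. -/
theorem strong_fair_sampling_postselected_eq_actual
    (K : Type*) [Fintype K] [DecidableEq K] [Nonempty K]
    (d : K → ℕ) (hd : ∀ k, 1 ≤ d k)
    (A X : K → Type*) [∀ k, Fintype (A k)] [∀ k, Nonempty (A k)]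
    [∀ k, Fintype (X k)] [∀ k, Nonempty (X k)]
    (M : ∀ k, X k → A k → Matrix (Fin (d k)) (Fin (d k)) ℂ)
    (hMpsd : ∀ k x a, (M k x a).PosSemidef)
    (e : ∀ k, X k → ℝ) (he0 : ∀ k x, 0 < e k x) (he1 : ∀ k x, e k x ≤ 1)
    (hfac : ∀ k x, ∑ a, M k x a = (e k x : ℂ) • (1 : Matrix (Fin (d k)) (Fin (d k)) ℂ))
    (Ψ : Matrix (∀ k, Fin (d k)) (∀ k, Fin (d k)) ℂ)
    (hΨ : Ψ.PosSemidef) (hΨtr : Ψ.trace = 1) :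
    (∀ k x, ∑ a, (e k x : ℂ)⁻¹ • M k x a = (1 : Matrix (Fin (d k)) (Fin (d k)) ℂ)) ∧
    ∀ (xb : ∀ k, X k) (ab : ∀ k, A k),
      Matrix.trace (tensorProd (fun k => M k (xb k) (ab k)) * Ψ) /
          Matrix.trace (tensorProd (fun k => ∑ a, M k (xb k) a) * Ψ) =
        Matrix.trace (tensorProd (fun k => (e k (xb k) : ℂ)⁻¹ • M k (xb k) (ab k)) * Ψ) :=
  strong_fair_sampling_postselected_eq_actual_general K d A X M e he0 hfac Ψ hΨtr
end

section
/- Let K be a nonempty finite set and for each k ∈ K let d_k ≥ 1, let Π_k be an orthogonal projection on ℂ^{d_k} (a Hermitian idempotent matrix), let A_k be a Hermitian d_k×d_k matrix with 0 ≼ A_k ≼ Π_k, and let ε_k ∈ [0,1] satisfy ‖Π_k − A_k‖ ≤ ε_k (ℓ²→ℓ² operator norm). Then ‖ ⊗_{k∈K} Π_k − ⊗_{k∈K} A_k ‖ ≤ 1 − Π_{k∈K} (1 − ε_k). In particular, a collection of devices each satisfying ε_k-approximate fair sampling jointly satisfies ε_tot-approximate fair sampling with ε_tot = 1 − Π_k(1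 − ε_k). -/
open scoped ComplexOrder

/-- The ℓ²→ℓ² operator norm of a complex square matrix. -/
noncomputable def opNorm {m : Type*} [Fintype m] [DecidableEq m]
    (M : Matrix m m ℂ) : ℝ :=
  ‖Matrix.toEuclideanCLM (𝕜 := ℂ) M‖

open scoped Matrix in
theorem aux_dummy : True := trivial

section Aux

open scoped Matrix

variable {n : Type*} [Fintype n] [DecidableEq n]

theorem aux_psd_nonneg_clm (M : Matrix n n ℂ) (h : M.PosSemidef) :
    0 ≤ Matrix.toEuclideanCLM (𝕜 := ℂ) M := by
  rw [ContinuousLinearMap.nonneg_iff_isPositive]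
  constructor
  · rw [← ContinuousLinearMap.isSelfAdjoint_iff_isSymmetric, isSelfAdjoint_iff, ← map_star]
    congr 1
    exact h.1
  · intro x
    set v : n → ℂ := x.ofLp with hv
    have h2 := h.dotProduct_mulVec_nonneg v
    rw [Complex.nonneg_iff] at h2
    rw [ContinuousLinearMap.reApplyInnerSelf, EuclideanSpace.inner_eq_star_dotProduct]
    have hMx : ((Matrix.toEuclideanCLM (𝕜 := ℂ) M) x).ofLp = M.mulVec v := by
      rw [Matrix.ofLp_toEuclideanCLM]
    rw [hMx]
    have : dotProduct v (star (M.mulVec v))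
        = star (dotProduct (star v) (M.mulVec v)) := by
      rw [dotProduct_comm, Matrix.star_dotProduct]
    rw [this]
    simpa using h2.1

/-- A Hermitian idempotent is PSD. -/
theorem aux_proj_psd (M : Matrix n n ℂ) (hH : M.IsHermitian) (h2 : M * M = M) :
    M.PosSemidef := by
  have : M = Mᴴ * M := by rw [hH.eq, h2]
  rw [this]
  exact Matrix.posSemidef_conjTranspose_mul_self M

/-- Nonneg real scalar multiple of PSD is PSD. -/
theorem aux_psd_smul (M : Matrix n n ℂ) (h : M.PosSemidef) (c : ℝ) (hc : 0 ≤ c) :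
    ((c : ℂ) • M).PosSemidef := by
  rw [Matrix.posSemidef_iff_dotProduct_mulVec]
  refine ⟨?_, fun x => ?_⟩
  · unfold Matrix.IsHermitian
    rw [Matrix.conjTranspose_smul, h.1.eq]
    congr 1
    simp
  · rw [Matrix.smul_mulVec, dotProduct_smul, smul_eq_mul]
    exact mul_nonneg (by exact_mod_cast hc) (h.dotProduct_mulVec_nonneg x)

/-- PSD matrix order and CLM norm: `0 ≼ M ≼ c•1` implies `‖M‖ ≤ c`. -/
theorem aux_opNorm_le (M : Matrix n n ℂ) (c : ℝ) (hc : 0 ≤ c)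
    (h0 : M.PosSemidef) (h1 : ((c : ℂ) • 1 - M).PosSemidef) :
    opNorm M ≤ c := by
  have hT0 : 0 ≤ Matrix.toEuclideanCLM (𝕜 := ℂ) M := aux_psd_nonneg_clm M h0
  have hT1 : Matrix.toEuclideanCLM (𝕜 := ℂ) M ≤
      (c : ℂ) • (1 : EuclideanSpace ℂ n →L[ℂ] EuclideanSpace ℂ n) := by
    have h' := aux_psd_nonneg_clm _ h1
    rw [map_sub, map_smul, map_one, ContinuousLinearMap.nonneg_iff_isPositive] at h'
    rw [ContinuousLinearMap.le_def]
    exact h'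
  have hle := CStarAlgebra.norm_le_norm_of_nonneg_of_le hT0 hT1
  have h2 : ‖(c : ℂ) • (1 : EuclideanSpace ℂ n →L[ℂ] EuclideanSpace ℂ n)‖ ≤ c := by
    refine le_trans (ContinuousLinearMap.opNorm_smul_le _ _) ?_
    have : ‖(c : ℂ)‖ = c := by rw [Complex.norm_real, Real.norm_of_nonneg hc]
    calc ‖(c:ℂ)‖ * ‖(1 : EuclideanSpace ℂ n →L[ℂ] EuclideanSpace ℂ n)‖
        ≤ ‖(c:ℂ)‖ * 1 :=
          mul_le_mul_of_nonneg_left ContinuousLinearMap.norm_id_le (norm_nonneg _)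
      _ = c := by rw [mul_one, this]
  exact le_trans hle h2

end Aux

section Tensor

open scoped Matrix

variable {K : Type*} [Fintype K] [DecidableEq K] {d : K → ℕ}

theorem tensorProd_conjTranspose (A : ∀ k, Matrix (Fin (d k)) (Fin (d k)) ℂ) :
    (tensorProd A)ᴴ = tensorProd (fun k => (A k)ᴴ) := by
  ext f g
  simp [tensorProd, Matrix.conjTranspose_apply, map_prod]

theorem tensorProd_mul (A B : ∀ k, Matrix (Fin (d k)) (Fin (d k)) ℂ) :
    tensorProd A * tensorProd B = tensorProd (fun k => A k * B k) := by
  ext f g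
  simp only [tensorProd, Matrix.mul_apply]
  rw [Finset.prod_univ_sum, Fintype.piFinset_univ]
  exact Finset.sum_congr rfl fun h _ => (Finset.prod_mul_distrib).symm

open scoped MatrixOrder in
theorem tensorProd_posSemidef (A : ∀ k, Matrix (Fin (d k)) (Fin (d k)) ℂ)
    (h : ∀ k, (A k).PosSemidef) : (tensorProd A).PosSemidef := by
  have key : tensorProd A
      = (tensorProd (fun k => CFC.sqrt (A k)))ᴴ * tensorProd (fun k => CFC.sqrt (A k)) := by
    rw [tensorProd_conjTranspose, tensorProd_mul]
    exact (congrArg tensorProd (funext fun k => by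
      rw [(Matrix.nonneg_iff_posSemidef.mp (CFC.sqrt_nonneg (A k))).1.eq, CFC.sqrt_mul_sqrt_self (A k) (h k).nonneg])).symm
  rw [key]
  exact Matrix.posSemidef_conjTranspose_mul_self _

theorem tensorProd_mono (A B : ∀ k, Matrix (Fin (d k)) (Fin (d k)) ℂ)
    (hB : ∀ k, (B k).PosSemidef) (hAB : ∀ k, (A k - B k).PosSemidef) :
    (tensorProd A - tensorProd B).PosSemidef := by
  have hA : ∀ k, (A k).PosSemidef := fun k => by
    have := (hB k).add (hAB k)
    simpa using this
  set F : Finset K → Matrix (∀ k, Fin (d k)) (∀ k, Fin (d k)) ℂ :=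
    fun S => tensorProd (fun k => if k ∈ S then B k else A k) with hF
  have main : ∀ S : Finset K, (tensorProd A - F S).PosSemidef := by
    intro S
    induction S using Finset.induction_on with
    | empty =>
        have : F ∅ = tensorProd A := by
          simp [hF, tensorProd]
        rw [this, sub_self]
        exact Matrix.PosSemidef.zero
    | @insert a S ha ih =>
        have step : (F S - F (insert a S)).PosSemidef := by
          set D : ∀ k, Matrix (Fin (d k)) (Fin (d k)) ℂ :=
            Function.update (fun k => if k ∈ S then B k else A k) a (A a - B a) with hD
          have hEq : F S - F (insert a S) = tensorProd D := by
            ext f g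
            simp only [Matrix.sub_apply, hF, tensorProd]
            rw [← Finset.mul_prod_erase Finset.univ
                (fun k => (if k ∈ S then B k else A k) (f k) (g k)) (Finset.mem_univ a),
              ← Finset.mul_prod_erase Finset.univ
                (fun k => (if k ∈ insert a S then B k else A k) (f k) (g k)) (Finset.mem_univ a),
              ← Finset.mul_prod_erase Finset.univ
                (fun k => D k (f k) (g k)) (Finset.mem_univ a)]
            have h1 : ∀ k ∈ Finset.univ.erase a,
                (if k ∈ insert a S then B k else A k) (f k) (g k)
                = (if k ∈ S then B k else A k) (f k) (g k) := by
              intro k hk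
              have hka : k ≠ a := Finset.ne_of_mem_erase hk
              simp [Finset.mem_insert, hka]
            have h2 : ∀ k ∈ Finset.univ.erase a,
                D k (f k) (g k) = (if k ∈ S then B k else A k) (f k) (g k) := by
              intro k hk
              have hka : k ≠ a := Finset.ne_of_mem_erase hk
              rw [hD, Function.update_of_ne hka]
            rw [Finset.prod_congr rfl h1, Finset.prod_congr rfl h2,
              if_pos (Finset.mem_insert_self a S), if_neg ha, hD, Function.update_self,
              Matrix.sub_apply]
            ring
          rw [hEq]
          apply tensorProd_posSemidef
          intro k
          by_cases hk : k = a
          · subst hk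
            rw [hD, Function.update_self]
            exact hAB k
          · rw [hD, Function.update_of_ne hk]
            by_cases hkS : k ∈ S <;> simp [hkS, hB k, hA k]
        have hsplit : tensorProd A - F (insert a S)
            = (tensorProd A - F S) + (F S - F (insert a S)) := by
          rw [sub_add_sub_cancel]
        rw [hsplit]
        exact ih.add step
  have : F Finset.univ = tensorProd B := by
    simp [hF, tensorProd]
  rw [← this]
  exact main Finset.univ

end Tensor


section Site

open scoped Matrix

variable {n : Type*} [Fintype n] [DecidableEq n]

/-- Key per-site estimate: `A ≽ (1-ε) P`. -/
theorem aux_site (P A : Matrix n n ℂ) (hPH : P.IsHermitian) (hP2 : P * P = P)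
    (hA0 : A.PosSemidef) (hAle : (P - A).PosSemidef)
    (e : ℝ) (hnorm : opNorm (P - A) ≤ e) :
    (A - ((1 - e : ℝ) : ℂ) • P).PosSemidef := by
  rw [Matrix.posSemidef_iff_dotProduct_mulVec]
  constructor
  · unfold Matrix.IsHermitian
    rw [Matrix.conjTranspose_sub, Matrix.conjTranspose_smul, hA0.1.eq, hPH.eq]
    congr 1
    simp
  · intro x
    set y : n → ℂ := P *ᵥ x with hy
    set z : n → ℂ := x - y with hz
    have hPy : P *ᵥ y = y := by rw [hy, Matrix.mulVec_mulVec, hP2]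
    have hPz : P *ᵥ z = 0 := by
      rw [hz, Matrix.mulVec_sub, hPy, sub_self]
    have hAzq : star z ⬝ᵥ A *ᵥ z = 0 := by
      have hq1 : 0 ≤ star z ⬝ᵥ A *ᵥ z := hA0.dotProduct_mulVec_nonneg z
      have hq2 : 0 ≤ star z ⬝ᵥ (P - A) *ᵥ z := hAle.dotProduct_mulVec_nonneg z
      rw [Matrix.sub_mulVec, hPz, dotProduct_sub, dotProduct_zero,
        zero_sub, le_neg, neg_zero] at hq2
      exact le_antisymm hq2 hq1
    have hAz : A *ᵥ z = 0 := (hA0.dotProduct_mulVec_zero_iff z).mp hAzq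
    have hzA : star z ᵥ* A = 0 := by
      have := congrArg star hAz
      rwa [Matrix.star_mulVec, hA0.1.eq, star_zero] at this
    have hzP : star z ᵥ* P = 0 := by
      have := congrArg star hPz
      rwa [Matrix.star_mulVec, hPH.eq, star_zero] at this
    have hx : x = y + z := by rw [hz]; ring
    -- main computation
    set s : ℂ := star y ⬝ᵥ y with hs
    set q : ℂ := star y ⬝ᵥ (P - A) *ᵥ y with hq
    have hexpr : star x ⬝ᵥ (A - ((1 - e : ℝ) : ℂ) • P) *ᵥ x = (e : ℂ) * s - q := by
      rw [Matrix.sub_mulVec, Matrix.smul_mulVec]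
      conv_lhs => rw [hx]
      rw [Matrix.mulVec_add, hAz, add_zero, Matrix.mulVec_add, hPy, hPz, add_zero]
      rw [star_add, add_dotProduct]
      rw [dotProduct_sub, dotProduct_sub]
      have e1 : star z ⬝ᵥ A *ᵥ y = 0 := by
        rw [Matrix.dotProduct_mulVec, hzA, zero_dotProduct]
      have e2 : star z ⬝ᵥ ((1 - e : ℝ) : ℂ) • y = 0 := by
        rw [← hPy, dotProduct_smul, Matrix.dotProduct_mulVec, hzP,
          zero_dotProduct, smul_zero]
      rw [e1, e2, sub_zero, add_zero]
      have e3 : star y ⬝ᵥ A *ᵥ y = s - q := by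
        rw [hq, Matrix.sub_mulVec, dotProduct_sub, hPy, hs]
        ring
      rw [e3, dotProduct_smul, ← hs, smul_eq_mul]
      push_cast
      ring
    rw [hexpr]
    -- now the analytic estimate
    set y' : EuclideanSpace ℂ n := WithLp.toLp 2 y with hy'
    set T := Matrix.toEuclideanCLM (𝕜 := ℂ) (P - A) with hT
    have hTy : T y' = WithLp.toLp 2 ((P - A) *ᵥ y) := by
      rw [hT, hy', Matrix.toEuclideanCLM_toLp]
    have hqinner : q = inner ℂ y' (T y') := by
      rw [hTy, hy', EuclideanSpace.inner_toLp_toLp, hq, dotProduct_comm]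
    have hsnorm : s = ((‖y'‖ : ℝ) : ℂ) ^ 2 := by
      have : (inner ℂ y' y' : ℂ) = ((‖y'‖ : ℝ) : ℂ) ^ 2 := inner_self_eq_norm_sq_to_K y'
      rw [← this, hy', EuclideanSpace.inner_toLp_toLp, hs, dotProduct_comm]
    have hq0 : 0 ≤ q := hAle.dotProduct_mulVec_nonneg y
    rw [Complex.nonneg_iff] at hq0
    have hqre : q.re ≤ e * ‖y'‖ ^ 2 := by
      have h1 : q.re ≤ ‖q‖ := Complex.re_le_norm q
      have h2 : ‖q‖ ≤ ‖y'‖ * ‖T y'‖ := by rw [hqinner]; exact norm_inner_le_norm y' (T y')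
      have h3 : ‖T y'‖ ≤ e * ‖y'‖ := by
        refine le_trans (T.le_opNorm y') ?_
        exact mul_le_mul_of_nonneg_right hnorm (norm_nonneg _)
      calc q.re ≤ ‖y'‖ * ‖T y'‖ := le_trans h1 h2
        _ ≤ ‖y'‖ * (e * ‖y'‖) :=
          mul_le_mul_of_nonneg_left h3 (norm_nonneg _)
        _ = e * ‖y'‖ ^ 2 := by ring
    rw [Complex.nonneg_iff]
    constructor
    · have hre : ((e : ℂ) * s - q).re = e * ‖y'‖ ^ 2 - q.re := by
        rw [hsnorm]
        simp [Complex.sub_re, Complex.mul_re, ← Complex.ofReal_pow]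
      rw [hre]
      linarith
    · have him : ((e : ℂ) * s - q).im = 0 := by
        rw [hsnorm]
        simp [Complex.sub_im, Complex.mul_im, ← Complex.ofReal_pow, ← hq0.2]
      rw [him]

end Site

open scoped Matrix

/-- If for each `k` the matrix `A_k` satisfies `0 ≼ A_k ≼ P_k` for an orthogonal
projection `P_k` and `‖P_k − A_k‖ ≤ ε_k ∈ [0,1]`, then
`‖⊗_k P_k − ⊗_k A_k‖ ≤ 1 − Π_k (1 − ε_k)`: a collection of devices each satisfying
`ε_k`-approximate fair sampling jointly satisfies `ε_tot`-approximate fair sampling. -/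
theorem tensorProd_approx_fair_sampling
    (K : Type*) [Fintype K] [DecidableEq K] [Nonempty K]
    (d : K → ℕ) (hd : ∀ k, 1 ≤ d k)
    (P : ∀ k, Matrix (Fin (d k)) (Fin (d k)) ℂ)
    (hPH : ∀ k, (P k).IsHermitian) (hP2 : ∀ k, P k * P k = P k)
    (A : ∀ k, Matrix (Fin (d k)) (Fin (d k)) ℂ)
    (hAH : ∀ k, (A k).IsHermitian)
    (hA0 : ∀ k, (A k).PosSemidef) (hAle : ∀ k, (P k - A k).PosSemidef)
    (ε : K → ℝ) (hε0 : ∀ k, 0 ≤ ε k) (hε1 : ∀ k, ε k ≤ 1)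
    (hnorm : ∀ k, opNorm (P k - A k) ≤ ε k) :
    opNorm (tensorProd P - tensorProd A) ≤ 1 - ∏ k, (1 - ε k) := by
  classical
  have hmem : ∀ k, 0 ≤ 1 - ε k ∧ 1 - ε k ≤ 1 :=
    fun k => ⟨by linarith [hε1 k], by linarith [hε0 k]⟩
  have hprod0 : 0 ≤ ∏ k, (1 - ε k) := Finset.prod_nonneg fun k _ => (hmem k).1
  have hprod1 : ∏ k, (1 - ε k) ≤ 1 :=
    Finset.prod_le_one (fun k _ => (hmem k).1) (fun k _ => (hmem k).2)
  set c : ℝ := 1 - ∏ k, (1 - ε k) with hc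
  have hc0 : 0 ≤ c := by rw [hc]; linarith
  have hP0 : ∀ k, (P k).PosSemidef := fun k => aux_proj_psd _ (hPH k) (hP2 k)
  set B : ∀ k, Matrix (Fin (d k)) (Fin (d k)) ℂ :=
    fun k => ((1 - ε k : ℝ) : ℂ) • P k with hB
  have hB0 : ∀ k, (B k).PosSemidef := fun k => aux_psd_smul _ (hP0 k) _ (hmem k).1
  have hABk : ∀ k, (A k - B k).PosSemidef :=
    fun k => aux_site (P k) (A k) (hPH k) (hP2 k) (hA0 k) (hAle k) (ε k) (hnorm k)
  have h1 : (tensorProd P - tensorProd A).PosSemidef := tensorProd_mono P A hA0 hAle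
  have h2 : (tensorProd A - tensorProd B).PosSemidef := tensorProd_mono A B hB0 hABk
  have hTB : tensorProd B = ((∏ k, (1 - ε k) : ℝ) : ℂ) • tensorProd P := by
    ext f g
    simp only [tensorProd, hB, Matrix.smul_apply, smul_eq_mul, Finset.prod_mul_distrib]
    push_cast
    ring
  set Q : Matrix (∀ k, Fin (d k)) (∀ k, Fin (d k)) ℂ := tensorProd P with hQ
  have hQH : Q.IsHermitian := by
    show Qᴴ = Q
    rw [hQ, tensorProd_conjTranspose]
    exact congrArg tensorProd (funext fun k => (hPH k).eq)
  have hQ2 : Q * Q = Q := by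
    rw [hQ, tensorProd_mul]
    exact congrArg tensorProd (funext fun k => hP2 k)
  have hIQ : ((1 : Matrix (∀ k, Fin (d k)) (∀ k, Fin (d k)) ℂ) - Q).PosSemidef := by
    refine aux_proj_psd _ ?_ ?_
    · show (1 - Q)ᴴ = 1 - Q
      rw [Matrix.conjTranspose_sub, Matrix.conjTranspose_one, hQH.eq]
    · rw [sub_mul, one_mul, mul_sub, mul_one, hQ2, sub_self, sub_zero]
  have hsm : (((c : ℝ) : ℂ) • (1 - Q)).PosSemidef := aux_psd_smul _ hIQ c hc0
  have hdecomp : ((c : ℝ) : ℂ) • 1 - (Q - tensorProd A)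
      = ((c : ℝ) : ℂ) • (1 - Q) + (tensorProd A - tensorProd B) := by
    rw [hTB, hc]
    push_cast
    module
  have h3 : (((c : ℝ) : ℂ) • 1 - (tensorProd P - tensorProd A)).PosSemidef := by
    rw [← hQ, hdecomp]
    exact hsm.add h2
  exact aux_opNorm_le _ c hc0 h1 h3
end
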